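/- arXiv:2110.06357 — 6 statements merged into one kernel-verified Lean document; each statement's English description precedes it below -/
import Mathlib

section
/- Let μ, ν be Borel probability measures on ℝ^D each supported in some ball of radius r. Then the operator norms of covariance matrices satisfy ‖Σ[μ] − Σ[ν]‖ ≤ 8r · W₁(μ, ν). -/
open MeasureTheory

/-- The `p`-Wasserstein distance between two Borel measures. -/
noncomputable def wassersteinDist {α : Type*} [MeasurableSpace α] [PseudoMetricSpace α]
    (p : ℝ) (μ ν : Measure α) : ℝ :=
  sInf { c | ∃ γ : Measure (α × α), γ.map Prod.fst = μ ∧ γ.map Prod.snd = ν ∧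
      c = (∫ z, dist z.1 z.2 ^ p ∂γ) ^ (1 / p) }

/-- The covariance matrix `E[(X - E X)(X - E X)ᵀ]` of a measure on `ℝ^D`. -/
noncomputable def covMatrix {D : ℕ} (μ : Measure (EuclideanSpace ℝ (Fin D))) :
    Matrix (Fin D) (Fin D) ℝ := fun i j =>
  ∫ x, (x i - (∫ y, y ∂μ) i) * (x j - (∫ y, y ∂μ) j) ∂μ

/-- The operator norm of a `D × D` real matrix, acting on Euclidean space. -/
noncomputable def matOpNorm {D : ℕ} (A : Matrix (Fin D) (Fin D) ℝ) : ℝ :=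
  ‖Matrix.toEuclideanCLM (𝕜 := ℝ) A‖

/-!
For any coupling `γ` of `μ` and `ν`, with means `m` and `n`, the two covariance forms are integrals
against `γ`: `covarianceBilin μ u v - covarianceBilin ν u v = ∫ F (x - m) - F (y - n) dγ(x, y)`
with `F w = ⟪u, w⟫ ⟪v, w⟫`. The means lie in the support balls, so both centred points have norm
at most `2r`, where `F` is `4r‖u‖‖v‖`-Lipschitz; together with `‖m - n‖ ≤ ∫ ‖x - y‖ dγ` this
bounds the difference by `8r‖u‖‖v‖ ∫ ‖x - y‖ dγ`. Unit vectors `u, v` and the infimum over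
couplings give the claim.
-/

open ProbabilityTheory
open scoped RealInnerProductSpace

section Coupling

variable {E : Type*} [MeasurableSpace E] {μ ν : Measure E} {γ : Measure (E × E)}

lemma norm_integral_sub_integral_le_of_map_fst_of_map_snd {F : Type*} [NormedAddCommGroup F]
    [NormedSpace ℝ F] (h₁ : γ.map Prod.fst = μ) (h₂ : γ.map Prod.snd = ν) {f g : E → F}
    (hf : Integrable f μ) (hg : Integrable g ν) :
    ‖∫ x, f x ∂μ - ∫ y, g y ∂ν‖ ≤ ∫ z, ‖f z.1 - g z.2‖ ∂γ := by
  subst h₁ h₂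
  have hf' : Integrable (fun z : E × E ↦ f z.1) γ := hf.comp_measurable measurable_fst
  have hg' : Integrable (fun z : E × E ↦ g z.2) γ := hg.comp_measurable measurable_snd
  rw [integral_map measurable_fst.aemeasurable hf.1, integral_map measurable_snd.aemeasurable hg.1,
    ← integral_sub hf' hg']
  exact norm_integral_le_integral_norm _

lemma integrable_dist_of_map_fst_of_map_snd [NormedAddCommGroup E] [OpensMeasurableSpace E]
    [SecondCountableTopology E] (h₁ : γ.map Prod.fst = μ) (h₂ : γ.map Prod.snd = ν)
    (hμ : Integrable id μ) (hν : Integrable id ν) :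
    Integrable (fun z ↦ dist z.1 z.2) γ := by
  subst h₁ h₂
  refine Integrable.mono' ((hμ.comp_measurable measurable_fst).norm.add
    (hν.comp_measurable measurable_snd).norm) (by fun_prop) (.of_forall fun z ↦ ?_)
  simpa [dist_eq_norm] using norm_sub_le z.1 z.2

end Coupling

section BoundedSupport

variable {E : Type*} [NormedAddCommGroup E] [SecondCountableTopology E] [MeasurableSpace E]
  [BorelSpace E] {μ : Measure E} {c : E} {r : ℝ}

lemma memLp_id_of_ae_mem_closedBall [IsFiniteMeasure μ] (h : ∀ᵐ x ∂μ, x ∈ Metric.closedBall c r)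
    (p : ENNReal) : MemLp id p μ :=
  .of_bound aestronglyMeasurable_id (‖c‖ + r) <| h.mono fun x hx ↦ by
    linarith [norm_le_norm_add_norm_sub' x c, mem_closedBall_iff_norm.1 hx,
      show ‖id x‖ = ‖x‖ from rfl]

lemma ae_norm_sub_integral_le [NormedSpace ℝ E] [CompleteSpace E] [IsProbabilityMeasure μ]
    (h : ∀ᵐ x ∂μ, x ∈ Metric.closedBall c r) : ∀ᵐ x ∂μ, ‖x - ∫ y, y ∂μ‖ ≤ 2 * r := by
  have hmean : ∫ y, y ∂μ ∈ Metric.closedBall c r :=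
    (convex_closedBall c r).integral_mem Metric.isClosed_closedBall h
      ((memLp_id_of_ae_mem_closedBall h 1).integrable le_rfl)
  filter_upwards [h] with x hx
  calc ‖x - ∫ y, y ∂μ‖ = dist x (∫ y, y ∂μ) := (dist_eq_norm _ _).symm
    _ ≤ dist x c + dist (∫ y, y ∂μ) c := dist_triangle_right _ _ _
    _ ≤ 2 * r := by linarith [Metric.mem_closedBall.1 hx, Metric.mem_closedBall.1 hmean]

end BoundedSupport

section InnerProductSpace

variable {E : Type*} [NormedAddCommGroup E] [InnerProductSpace ℝ E]

lemma abs_inner_mul_inner_sub_inner_mul_inner_le (u v : E) {x y : E} {R : ℝ} (hx : ‖x‖ ≤ R)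
    (hy : ‖y‖ ≤ R) :
    |⟪u, x⟫ * ⟪v, x⟫ - ⟪u, y⟫ * ⟪v, y⟫| ≤ 2 * R * ‖u‖ * ‖v‖ * ‖x - y‖ := by
  have hR : 0 ≤ R := (norm_nonneg x).trans hx
  have hux : |⟪u, x⟫ - ⟪u, y⟫| ≤ ‖u‖ * ‖x - y‖ := by
    simpa only [inner_sub_right] using abs_real_inner_le_norm u (x - y)
  have hvx : |⟪v, x⟫ - ⟪v, y⟫| ≤ ‖v‖ * ‖x - y‖ := by
    simpa only [inner_sub_right] using abs_real_inner_le_norm v (x - y)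
  have hv : |⟪v, x⟫| ≤ ‖v‖ * R :=
    (abs_real_inner_le_norm _ _).trans (mul_le_mul_of_nonneg_left hx (norm_nonneg _))
  have hu : |⟪u, y⟫| ≤ ‖u‖ * R :=
    (abs_real_inner_le_norm _ _).trans (mul_le_mul_of_nonneg_left hy (norm_nonneg _))
  calc |⟪u, x⟫ * ⟪v, x⟫ - ⟪u, y⟫ * ⟪v, y⟫|
      = |(⟪u, x⟫ - ⟪u, y⟫) * ⟪v, x⟫ + ⟪u, y⟫ * (⟪v, x⟫ - ⟪v, y⟫)| := by ring_nf
    _ ≤ |(⟪u, x⟫ - ⟪u, y⟫) * ⟪v, x⟫| + |⟪u, y⟫ * (⟪v, x⟫ - ⟪v, y⟫)| := abs_add_le _ _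
    _ ≤ (‖u‖ * ‖x - y‖) * (‖v‖ * R) + (‖u‖ * R) * (‖v‖ * ‖x - y‖) := by
      rw [abs_mul, abs_mul]
      gcongr
    _ = 2 * R * ‖u‖ * ‖v‖ * ‖x - y‖ := by ring

variable [CompleteSpace E] [SecondCountableTopology E] [MeasurableSpace E] [BorelSpace E]
  {μ ν : Measure E} [IsProbabilityMeasure μ] [IsProbabilityMeasure ν] {γ : Measure (E × E)}

lemma abs_covarianceBilin_sub_le (h₁ : γ.map Prod.fst = μ) (h₂ : γ.map Prod.snd = ν) {R : ℝ}
    (hμ : ∀ᵐ x ∂μ, ‖x - ∫ y, y ∂μ‖ ≤ R) (hν : ∀ᵐ y ∂ν, ‖y - ∫ x, x ∂ν‖ ≤ R) (u v : E) :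
    |covarianceBilin μ u v - covarianceBilin ν u v|
      ≤ 4 * R * ‖u‖ * ‖v‖ * ∫ z, dist z.1 z.2 ∂γ := by
  have : IsProbabilityMeasure γ := by subst h₁; exact Measure.isProbabilityMeasure_of_map Prod.fst
  have hR : 0 ≤ R := hμ.exists.elim fun _ hx ↦ (norm_nonneg _).trans hx
  have hμ2 : MemLp id 2 μ :=
    memLp_id_of_ae_mem_closedBall (hμ.mono fun _ ↦ mem_closedBall_iff_norm.2) 2
  have hν2 : MemLp id 2 ν :=
    memLp_id_of_ae_mem_closedBall (hν.mono fun _ ↦ mem_closedBall_iff_norm.2) 2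
  have hdist := integrable_dist_of_map_fst_of_map_snd h₁ h₂ (hμ2.integrable one_le_two)
    (hν2.integrable one_le_two)
  rw [covarianceBilin_apply hμ2, covarianceBilin_apply hν2, ← Real.norm_eq_abs]
  simp only [id_eq]
  set m := ∫ y, y ∂μ
  set n := ∫ y, y ∂ν
  set I := ∫ z, dist z.1 z.2 ∂γ
  have hmn : ‖m - n‖ ≤ I := by
    refine (norm_integral_sub_integral_le_of_map_fst_of_map_snd h₁ h₂
      (hμ2.integrable one_le_two) (hν2.integrable one_le_two)).trans_eq ?_
    simp only [I, dist_eq_norm, id_eq]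
  have hpointwise : ∀ᵐ z ∂γ, ‖⟪u, z.1 - m⟫ * ⟪v, z.1 - m⟫ - ⟪u, z.2 - n⟫ * ⟪v, z.2 - n⟫‖
      ≤ 2 * R * ‖u‖ * ‖v‖ * (dist z.1 z.2 + ‖m - n‖) := by
    rw [← h₁] at hμ
    rw [← h₂] at hν
    filter_upwards [ae_of_ae_map measurable_fst.aemeasurable hμ,
      ae_of_ae_map measurable_snd.aemeasurable hν] with z hz₁ hz₂
    refine (abs_inner_mul_inner_sub_inner_mul_inner_le u v hz₁ hz₂).trans ?_
    gcongr
    rw [dist_eq_norm, sub_sub_sub_comm]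
    exact norm_sub_le _ _
  calc _ ≤ ∫ z, ‖⟪u, z.1 - m⟫ * ⟪v, z.1 - m⟫ - ⟪u, z.2 - n⟫ * ⟪v, z.2 - n⟫‖ ∂γ :=
        norm_integral_sub_integral_le_of_map_fst_of_map_snd h₁ h₂
          (((hμ2.sub (memLp_const m)).const_inner u).integrable_mul
            ((hμ2.sub (memLp_const m)).const_inner v))
          (((hν2.sub (memLp_const n)).const_inner u).integrable_mul
            ((hν2.sub (memLp_const n)).const_inner v))
    _ ≤ ∫ z, 2 * R * ‖u‖ * ‖v‖ * (dist z.1 z.2 + ‖m - n‖) ∂γ :=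
        integral_mono_of_nonneg (.of_forall fun _ ↦ norm_nonneg _)
          ((hdist.add (integrable_const _)).const_mul _) hpointwise
    _ = 2 * R * ‖u‖ * ‖v‖ * (I + ‖m - n‖) := by
        rw [integral_const_mul, integral_add hdist (integrable_const _), integral_const,
          probReal_univ, one_smul]
    _ ≤ 4 * R * ‖u‖ * ‖v‖ * I := by
        have : 0 ≤ 2 * R * ‖u‖ * ‖v‖ := by positivity
        nlinarith

end InnerProductSpace

section EuclideanSpace

variable {D : ℕ} {μ : Measure (EuclideanSpace ℝ (Fin D))}

lemma covMatrix_apply_eq_covariance (hμ : Integrable id μ) (i j : Fin D) :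
    covMatrix μ i j = cov[fun x ↦ x i, fun x ↦ x j; μ] := by
  simp only [covMatrix, covariance, eval_integral_piLp (f := fun x ↦ x) hμ.eval_piLp]

lemma inner_toEuclideanCLM_covMatrix [IsFiniteMeasure μ] (hμ : MemLp id 2 μ)
    (u v : EuclideanSpace ℝ (Fin D)) :
    ⟪u, Matrix.toEuclideanCLM (𝕜 := ℝ) (covMatrix μ) v⟫ = covarianceBilin μ u v := by
  have h := covarianceBilin_apply_pi (μ := μ) (X := fun i x ↦ x i) (fun i ↦ hμ.eval_piLp i) u v
  simp only [WithLp.toLp_ofLp, Measure.map_id'] at h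
  simp only [h, Matrix.inner_toEuclideanCLM, dotProduct, Matrix.mulVec, Finset.mul_sum,
    covMatrix_apply_eq_covariance (hμ.integrable one_le_two)]
  exact Finset.sum_congr rfl fun i _ ↦ Finset.sum_congr rfl fun j _ ↦ by ring

end EuclideanSpace

lemma le_wassersteinDist_one {α : Type*} [MeasurableSpace α] [PseudoMetricSpace α]
    {μ ν : Measure α} [IsProbabilityMeasure μ] [IsProbabilityMeasure ν] {a : ℝ}
    (h : ∀ γ : Measure (α × α), γ.map Prod.fst = μ → γ.map Prod.snd = ν →
      a ≤ ∫ z, dist z.1 z.2 ∂γ) :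
    a ≤ wassersteinDist 1 μ ν := by
  refine le_csInf ⟨_, μ.prod ν, by simp, by simp, rfl⟩ ?_
  rintro _ ⟨γ, h₁, h₂, rfl⟩
  simpa using h γ h₁ h₂

theorem stmt3 {D : ℕ} (r : ℝ) (μ ν : Measure (EuclideanSpace ℝ (Fin D)))
    [IsProbabilityMeasure μ] [IsProbabilityMeasure ν]
    (cμ cν : EuclideanSpace ℝ (Fin D))
    (hμ : ∀ᵐ x ∂μ, x ∈ Metric.ball cμ r) (hν : ∀ᵐ y ∂ν, y ∈ Metric.ball cν r) :
    matOpNorm (covMatrix μ - covMatrix ν) ≤ 8 * r * wassersteinDist 1 μ ν := by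
  have hr : 0 < r := hμ.exists.elim fun _ ↦ Metric.pos_of_mem_ball
  have hμ' : ∀ᵐ x ∂μ, x ∈ Metric.closedBall cμ r :=
    hμ.mono fun _ hx ↦ Metric.ball_subset_closedBall hx
  have hν' : ∀ᵐ y ∂ν, y ∈ Metric.closedBall cν r :=
    hν.mono fun _ hy ↦ Metric.ball_subset_closedBall hy
  have hμ2 := memLp_id_of_ae_mem_closedBall hμ' 2
  have hν2 := memLp_id_of_ae_mem_closedBall hν' 2
  rw [← div_le_iff₀' (by positivity)]
  refine le_wassersteinDist_one fun γ h₁ h₂ ↦ ?_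
  rw [div_le_iff₀' (by positivity)]
  refine ContinuousLinearMap.opNorm_le_of_re_inner_le (by positivity) fun v u hv hu ↦ ?_
  rw [RCLike.re_to_real, real_inner_comm, map_sub, sub_apply,
    inner_sub_right, inner_toEuclideanCLM_covMatrix hμ2, inner_toEuclideanCLM_covMatrix hν2]
  calc _ ≤ _ := le_abs_self _
    _ ≤ 4 * (2 * r) * ‖u‖ * ‖v‖ * ∫ z, dist z.1 z.2 ∂γ :=
        abs_covarianceBilin_sub_le h₁ h₂ (ae_norm_sub_integral_le hμ') (ae_norm_sub_integral_le hν')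
          u v
    _ = _ := by rw [hu, hv]; ring
end

section
/- Let Y₁, …, Y_m be independent ℝ^D-valued random vectors with E[Y_i] = 0 and ‖Y_i‖ ≤ α_i almost surely. Write σ² = Σᵢ αᵢ². Then for every ε ≥ 0, P(‖Y₁ + ⋯ + Y_m‖ ≥ ε) ≤ 2(D+1)·exp(−ε²/(8σ²)). -/
open MeasureTheory ProbabilityTheory Finset

/-!
Pinelis' argument, which needs no matrix dilation and gives the stronger bound
`2 exp (-ε² / (2σ²))`. Since `u ↦ cosh √u` is convex, interpolating between
`‖a‖ + α` and `‖a‖ - α` gives, for `‖y‖ ≤ α`,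
`cosh (t‖a + y‖) ≤ cosh (t‖a‖) cosh (tα) + ⟪g a, y⟫` with `g a` depending on `a` only.
For `y` independent of `a` and centred, the last term has expectation zero, so
`E cosh (t‖Y₁ + ⋯ + Yₖ‖) ≤ ∏ cosh (tαᵢ) ≤ exp (t²σ²/2)`. A Chernoff bound with
`exp ≤ 2 cosh` and `t = ε/σ²` finishes.
-/

open Real

theorem convexOn_cosh_sqrt : ConvexOn ℝ (Set.Ici 0) fun u : ℝ => cosh √u := by
  have hasSum_cosh_sqrt (u : ℝ) (hu : 0 ≤ u) :
      HasSum (fun n : ℕ => u ^ n / (2 * n).factorial) (cosh √u) := by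
    convert hasSum_cosh √u using 2 with n
    rw [pow_mul, sq_sqrt hu]
  refine ⟨convex_Ici 0, fun u hu v hv a b ha hb hab => ?_⟩
  refine hasSum_le (fun n => ?_) (hasSum_cosh_sqrt _ (add_nonneg (mul_nonneg ha hu) (mul_nonneg hb hv)))
    (((hasSum_cosh_sqrt u hu).mul_left a).add ((hasSum_cosh_sqrt v hv).mul_left b))
  have hpow := (convexOn_pow n).2 hu hv ha hb hab
  simp only [smul_eq_mul] at hpow
  calc (a * u + b * v) ^ n / (2 * n).factorial
      ≤ (a * u ^ n + b * v ^ n) / (2 * n).factorial := by gcongr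
    _ = a * (u ^ n / (2 * n).factorial) + b * (v ^ n / (2 * n).factorial) := by ring

theorem cosh_sqrt_sq_add_sq_add_two_mul_le (c β : ℝ) {s : ℝ} (hs : |s| ≤ 1) :
    cosh √(c ^ 2 + β ^ 2 + 2 * c * β * s) ≤ cosh c * cosh β + s * (sinh c * sinh β) := by
  obtain ⟨hs₁, hs₂⟩ := abs_le.1 hs
  have h := convexOn_cosh_sqrt.2 (sq_nonneg (c + β)) (sq_nonneg (c - β))
    (by linarith : 0 ≤ (1 + s) / 2) (by linarith : 0 ≤ (1 - s) / 2) (by ring)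
  simp only [smul_eq_mul, sqrt_sq_eq_abs, cosh_abs] at h
  calc cosh √(c ^ 2 + β ^ 2 + 2 * c * β * s)
      = cosh √((1 + s) / 2 * (c + β) ^ 2 + (1 - s) / 2 * (c - β) ^ 2) := by ring_nf
    _ ≤ (1 + s) / 2 * cosh (c + β) + (1 - s) / 2 * cosh (c - β) := h
    _ = cosh c * cosh β + s * (sinh c * sinh β) := by rw [cosh_add, cosh_sub]; ring

section InnerProductSpace

variable {E : Type*} [NormedAddCommGroup E] [InnerProductSpace ℝ E]

local notation "⟪" x ", " y "⟫" => inner ℝ x y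

theorem norm_sinh_div_norm_smul_self {t : ℝ} (ht : 0 ≤ t) (a : E) :
    ‖(sinh (t * ‖a‖) / ‖a‖) • a‖ = sinh (t * ‖a‖) := by
  rcases eq_or_ne a 0 with rfl | ha
  · simp
  · rw [norm_smul, norm_div, norm_of_nonneg (sinh_nonneg_iff.2 (by positivity)), norm_norm,
      div_mul_cancel₀ _ (norm_ne_zero_iff.2 ha)]

theorem cosh_mul_norm_add_le {t α : ℝ} (ht : 0 ≤ t) (a : E) {y : E} (hy : ‖y‖ ≤ α) :
    cosh (t * ‖a + y‖) ≤
      cosh (t * ‖a‖) * cosh (t * α) + sinh (t * α) / α * ⟪(sinh (t * ‖a‖) / ‖a‖) • a, y⟫ := by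
  have hα : 0 ≤ α := (norm_nonneg y).trans hy
  have hinner : |⟪a, y⟫| ≤ ‖a‖ * α :=
    (abs_real_inner_le_norm a y).trans (mul_le_mul_of_nonneg_left hy (norm_nonneg a))
  -- a cosine-like parameter in `[-1, 1]`; it is the junk value `0` when `‖a‖ * α = 0`
  set s := ⟪a, y⟫ / (‖a‖ * α) with hs
  have hs_abs : |s| ≤ 1 := by
    rw [abs_div, abs_of_nonneg (mul_nonneg (norm_nonneg a) hα)]
    exact div_le_one_of_le₀ hinner (mul_nonneg (norm_nonneg a) hα)
  have hs_mul : ‖a‖ * α * s = ⟪a, y⟫ := by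
    rcases eq_or_ne (‖a‖ * α) 0 with h | h
    · rw [h, zero_mul, eq_comm, ← abs_nonpos_iff, ← h]
      exact hinner
    · exact mul_div_cancel₀ _ h
  have hnorm : t * ‖a + y‖ ≤ √((t * ‖a‖) ^ 2 + (t * α) ^ 2 + 2 * (t * ‖a‖) * (t * α) * s) := by
    refine le_sqrt_of_sq_le ?_
    calc (t * ‖a + y‖) ^ 2 = t ^ 2 * (‖a‖ ^ 2 + 2 * ⟪a, y⟫ + ‖y‖ ^ 2) := by
          rw [mul_pow, norm_add_sq_real]
      _ ≤ t ^ 2 * (‖a‖ ^ 2 + 2 * ⟪a, y⟫ + α ^ 2) := by gcongr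
      _ = (t * ‖a‖) ^ 2 + (t * α) ^ 2 + 2 * (t * ‖a‖) * (t * α) * s := by rw [← hs_mul]; ring
  calc cosh (t * ‖a + y‖)
      ≤ cosh √((t * ‖a‖) ^ 2 + (t * α) ^ 2 + 2 * (t * ‖a‖) * (t * α) * s) :=
        cosh_le_cosh.2 (abs_le_abs_of_nonneg (by positivity) hnorm)
    _ ≤ cosh (t * ‖a‖) * cosh (t * α) + s * (sinh (t * ‖a‖) * sinh (t * α)) :=
        cosh_sqrt_sq_add_sq_add_two_mul_le _ _ hs_abs
    _ = cosh (t * ‖a‖) * cosh (t * α) + sinh (t * α) / α * ⟪(sinh (t * ‖a‖) / ‖a‖) • a, y⟫ := by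
        rw [real_inner_smul_left, hs]; ring

end InnerProductSpace

section Probability

variable {Ω E : Type*} {_ : MeasurableSpace Ω} {μ : Measure Ω} [IsFiniteMeasure μ]
  [NormedAddCommGroup E]

theorem integrable_cosh_mul_norm_of_ae_le {X : Ω → E} (hX : AEStronglyMeasurable X μ) {A : ℝ}
    (hXA : ∀ᵐ ω ∂μ, ‖X ω‖ ≤ A) (t : ℝ) : Integrable (fun ω => cosh (t * ‖X ω‖)) μ := by
  refine .of_bound (by fun_prop) (cosh (t * A)) ?_
  filter_upwards [hXA] with ω hω
  rw [norm_of_nonneg (cosh_pos _).le, cosh_le_cosh, abs_mul, abs_mul, abs_norm]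
  exact mul_le_mul_of_nonneg_left (hω.trans (le_abs_self A)) (abs_nonneg t)

variable [InnerProductSpace ℝ E] [CompleteSpace E] [MeasurableSpace E] [BorelSpace E]
  [SecondCountableTopology E]

local notation "⟪" x ", " y "⟫" => inner ℝ x y

theorem integral_cosh_mul_norm_add_le {X Z : Ω → E} (hX : Measurable X) (hZ : Measurable Z)
    (hXZ : IndepFun X Z μ) {A α t : ℝ} (ht : 0 ≤ t) (hXA : ∀ᵐ ω ∂μ, ‖X ω‖ ≤ A)
    (hZα : ∀ᵐ ω ∂μ, ‖Z ω‖ ≤ α) (hZ_mean : ∫ ω, Z ω ∂μ = 0) :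
    ∫ ω, cosh (t * ‖X ω + Z ω‖) ∂μ ≤ (∫ ω, cosh (t * ‖X ω‖) ∂μ) * cosh (t * α) := by
  set g : E → E := fun a => (sinh (t * ‖a‖) / ‖a‖) • a
  have hg : Measurable g := by fun_prop
  have hgX : Integrable (fun ω => g (X ω)) μ := by
    refine .of_bound (hg.comp hX).aestronglyMeasurable (sinh (t * A)) ?_
    filter_upwards [hXA] with ω hω
    rw [norm_sinh_div_norm_smul_self ht, sinh_le_sinh]
    exact mul_le_mul_of_nonneg_left hω ht
  have hZ_int : Integrable Z μ := .of_bound hZ.aestronglyMeasurable α hZα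
  have h_inner : ∫ ω, ⟪g (X ω), Z ω⟫ ∂μ = 0 := by
    have := (hXZ.comp hg measurable_id).integral_bilin hgX hZ_int (innerSL ℝ)
    simp only [Function.comp_apply, id_eq, hZ_mean, map_zero] at this
    exact this
  have hXZ_bdd : ∀ᵐ ω ∂μ, ‖X ω + Z ω‖ ≤ A + α := by
    filter_upwards [hXA, hZα] with ω h₁ h₂
    exact (norm_add_le _ _).trans (add_le_add h₁ h₂)
  have hcoshX := integrable_cosh_mul_norm_of_ae_le hX.aestronglyMeasurable hXA t
  have h_inner_int : Integrable (fun ω => sinh (t * α) / α * ⟪g (X ω), Z ω⟫) μ :=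
    ((hXZ.comp hg measurable_id).integrable_bilin hgX hZ_int (innerSL ℝ)).const_mul _
  calc ∫ ω, cosh (t * ‖X ω + Z ω‖) ∂μ
      ≤ ∫ ω, cosh (t * ‖X ω‖) * cosh (t * α) + sinh (t * α) / α * ⟪g (X ω), Z ω⟫ ∂μ := by
        refine integral_mono_ae
          (integrable_cosh_mul_norm_of_ae_le (hX.add hZ).aestronglyMeasurable hXZ_bdd t)
          ((hcoshX.mul_const _).add h_inner_int) ?_
        filter_upwards [hZα] with ω hω
        exact cosh_mul_norm_add_le ht _ hω
    _ = (∫ ω, cosh (t * ‖X ω‖) ∂μ) * cosh (t * α) := by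
        rw [integral_add (hcoshX.mul_const _) h_inner_int, integral_const_mul, h_inner,
          mul_zero, add_zero, integral_mul_const]

end Probability

section Hoeffding

variable {Ω E ι : Type*} {_ : MeasurableSpace Ω} {μ : Measure Ω} [IsProbabilityMeasure μ]
  [NormedAddCommGroup E] [InnerProductSpace ℝ E] [CompleteSpace E] [MeasurableSpace E]
  [BorelSpace E] [SecondCountableTopology E]
  {Y : ι → Ω → E} {α : ι → ℝ}

theorem integral_cosh_mul_norm_sum_le (hmeas : ∀ i, Measurable (Y i)) (hindep : iIndepFun Y μ)
    (hmean : ∀ i, ∫ ω, Y i ω ∂μ = 0) (hbdd : ∀ i, ∀ᵐ ω ∂μ, ‖Y i ω‖ ≤ α i) {t : ℝ} (ht : 0 ≤ t)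
    (s : Finset ι) :
    ∫ ω, cosh (t * ‖∑ i ∈ s, Y i ω‖) ∂μ ≤ exp (t ^ 2 * (∑ i ∈ s, α i ^ 2) / 2) := by
  classical
  induction s using Finset.induction with
  | empty => simp
  | @insert a s ha ih =>
    have hind : IndepFun (fun ω => ∑ i ∈ s, Y i ω) (Y a) μ := by
      simpa only [← Finset.sum_apply] using hindep.indepFun_finsetSum_of_notMem hmeas ha
    have hsum_bdd : ∀ᵐ ω ∂μ, ‖∑ i ∈ s, Y i ω‖ ≤ ∑ i ∈ s, α i := by
      filter_upwards [(Filter.eventually_all_finset s).2 fun i _ => hbdd i] with ω hω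
      exact (norm_sum_le _ _).trans (Finset.sum_le_sum hω)
    calc ∫ ω, cosh (t * ‖∑ i ∈ insert a s, Y i ω‖) ∂μ
        = ∫ ω, cosh (t * ‖∑ i ∈ s, Y i ω + Y a ω‖) ∂μ := by
          simp_rw [Finset.sum_insert ha, add_comm (Y a _)]
      _ ≤ (∫ ω, cosh (t * ‖∑ i ∈ s, Y i ω‖) ∂μ) * cosh (t * α a) :=
          integral_cosh_mul_norm_add_le (Finset.measurable_sum s fun i _ => hmeas i) (hmeas a)
            hind ht hsum_bdd (hbdd a) (hmean a)
      _ ≤ exp (t ^ 2 * (∑ i ∈ s, α i ^ 2) / 2) * exp ((t * α a) ^ 2 / 2) :=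
          mul_le_mul ih (cosh_le_exp_half_sq _) (cosh_pos _).le (exp_nonneg _)
      _ = exp (t ^ 2 * (∑ i ∈ insert a s, α i ^ 2) / 2) := by
          rw [← exp_add, Finset.sum_insert ha]
          ring_nf

theorem measure_norm_sum_ge_le [Fintype ι] (hmeas : ∀ i, Measurable (Y i))
    (hindep : iIndepFun Y μ) (hmean : ∀ i, ∫ ω, Y i ω ∂μ = 0)
    (hbdd : ∀ i, ∀ᵐ ω ∂μ, ‖Y i ω‖ ≤ α i) {ε : ℝ} (hε : 0 ≤ ε) :
    μ {ω | ε ≤ ‖∑ i, Y i ω‖} ≤ ENNReal.ofReal (2 * exp (-ε ^ 2 / (2 * ∑ i, α i ^ 2))) := by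
  set σ2 := ∑ i, α i ^ 2
  rcases (Finset.sum_nonneg fun i _ => sq_nonneg (α i) : 0 ≤ σ2).eq_or_lt with hσ | hσ
  · rw [show σ2 = 0 from hσ.symm, mul_zero, div_zero, exp_zero]
    exact prob_le_one.trans (ENNReal.one_le_ofReal.2 (by norm_num))
  set t := ε / σ2
  have ht : 0 ≤ t := div_nonneg hε hσ.le
  have hS : Measurable fun ω => ∑ i, Y i ω := Finset.measurable_sum _ fun i _ => hmeas i
  have hS_bdd : ∀ᵐ ω ∂μ, ‖∑ i, Y i ω‖ ≤ ∑ i, α i := by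
    filter_upwards [ae_all_iff.2 hbdd] with ω hω
    exact (norm_sum_le _ _).trans (Finset.sum_le_sum fun i _ => hω i)
  have hcosh := integrable_cosh_mul_norm_of_ae_le hS.aestronglyMeasurable hS_bdd t
  have hexp_le (x : ℝ) : exp x ≤ 2 * cosh x := by
    linarith [cosh_add_sinh x, sinh_lt_cosh x]
  have hexp : Integrable (fun ω => exp (t * ‖∑ i, Y i ω‖)) μ :=
    (hcosh.const_mul 2).mono' (by fun_prop)
      (ae_of_all _ fun ω => (norm_of_nonneg (exp_pos _).le).trans_le (hexp_le _))
  have hmgf : mgf (fun ω => ‖∑ i, Y i ω‖) μ t ≤ 2 * exp (t ^ 2 * σ2 / 2) :=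
    calc mgf (fun ω => ‖∑ i, Y i ω‖) μ t
        ≤ ∫ ω, 2 * cosh (t * ‖∑ i, Y i ω‖) ∂μ :=
          integral_mono hexp (hcosh.const_mul 2) fun ω => hexp_le _
      _ ≤ 2 * exp (t ^ 2 * σ2 / 2) := by
          rw [integral_const_mul]
          gcongr
          exact integral_cosh_mul_norm_sum_le hmeas hindep hmean hbdd ht _
  rw [← ENNReal.ofReal_toReal (measure_ne_top μ _)]
  refine ENNReal.ofReal_le_ofReal ?_
  calc μ.real {ω | ε ≤ ‖∑ i, Y i ω‖}
      ≤ exp (-t * ε) * mgf (fun ω => ‖∑ i, Y i ω‖) μ t := measure_ge_le_exp_mul_mgf ε ht hexp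
    _ ≤ exp (-t * ε) * (2 * exp (t ^ 2 * σ2 / 2)) := by gcongr
    _ = 2 * exp (-ε ^ 2 / (2 * σ2)) := by
        rw [mul_left_comm, ← exp_add]
        congr 2
        simp only [t]
        field_simp
        ring

end Hoeffding

theorem stmt9 {Ω : Type*} [MeasureSpace Ω] [IsProbabilityMeasure (ℙ : Measure Ω)]
    {D m : ℕ} (Y : Fin m → Ω → EuclideanSpace ℝ (Fin D))
    (hmeas : ∀ i, Measurable (Y i)) (hindep : iIndepFun Y)
    (hmean : ∀ i, ∫ ω, Y i ω = 0)
    (α : Fin m → ℝ) (hbdd : ∀ i, ∀ᵐ ω ∂ℙ, ‖Y i ω‖ ≤ α i)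
    (σ2 : ℝ) (hσ2 : σ2 = ∑ i, (α i) ^ 2) (ε : ℝ) (hε : 0 ≤ ε) :
    (ℙ {ω | ε ≤ ‖∑ i, Y i ω‖}) ≤
      ENNReal.ofReal (2 * ((D : ℝ) + 1) * Real.exp (-ε ^ 2 / (8 * σ2))) := by
  refine (measure_norm_sum_ge_le hmeas hindep hmean hbdd hε).trans (ENNReal.ofReal_le_ofReal ?_)
  rw [← hσ2]
  have hratio : 0 ≤ ε ^ 2 / σ2 := by rw [hσ2]; positivity
  calc 2 * exp (-ε ^ 2 / (2 * σ2))
      ≤ 2 * exp (-ε ^ 2 / (8 * σ2)) := by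
        gcongr 2 * exp ?_
        linarith [show -ε ^ 2 / (2 * σ2) - -ε ^ 2 / (8 * σ2) = -3 / 8 * (ε ^ 2 / σ2) by ring]
    _ ≤ 2 * ((D : ℝ) + 1) * exp (-ε ^ 2 / (8 * σ2)) := by
        gcongr
        exact le_mul_of_one_le_right zero_le_two (by simp)
end

section
/- For the vectors λ(d, D) = (1/(d+2))·(1,…,1,0,…,0) ∈ ℝ^D with d ones, and for any nonnegative integer k ≤ D with k ≠ d, ‖λ(k,D) − λ(d,D)‖ ≥ ‖λ(d,D) − λ(d+1,D)‖ = √((d+1)(d+4))/((d+2)(d+3)). -/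
/-!
Splitting the coordinates at `m ≤ M`, `‖λ(m) - λ(M)‖² = m (1/(m+2) - 1/(M+2))² + (M - m)/(M+2)²`,
which simplifies to `(M - m)(m(M + 4) + 4) / ((m+2)(M+2))²`. For the neighbour `M = d + 1` this is
`(d+1)(d+4) / ((d+2)(d+3))²`; comparing it with any other `k` reduces, after clearing denominators
and writing `k = d + 1 + s` or `d = k + 1 + s`, to polynomial inequalities in `s ≥ 0`.
-/

/-- The vector with `d` entries equal to `1/(d+2)` followed by `D - d` zeros. -/
noncomputable def lamVec (d D : ℕ) : EuclideanSpace ℝ (Fin D) :=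
  WithLp.toLp 2 (fun i : Fin D => if (i : ℕ) < d then 1 / ((d : ℝ) + 2) else 0)

open Finset

theorem EuclideanSpace.norm_sq_toLp_ite_lt_sub {m M D : ℕ} (hmM : m ≤ M) (hMD : M ≤ D) (a b : ℝ) :
    ‖WithLp.toLp 2 (fun i : Fin D => if (i : ℕ) < m then a else 0) -
        WithLp.toLp 2 (fun i : Fin D => if (i : ℕ) < M then b else 0)‖ ^ 2 =
      m * (a - b) ^ 2 + (M - m) * b ^ 2 := by
  have hsplit : ∀ i : Fin D,
      ‖(WithLp.toLp 2 (fun i : Fin D => if (i : ℕ) < m then a else 0) -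
        WithLp.toLp 2 (fun i : Fin D => if (i : ℕ) < M then b else 0)) i‖ ^ 2 =
      (if (i : ℕ) < m then (a - b) ^ 2 - b ^ 2 else 0) + (if (i : ℕ) < M then b ^ 2 else 0) := by
    intro i
    simp only [PiLp.sub_apply, Real.norm_eq_abs, sq_abs]
    split_ifs <;> first | omega | ring
  rw [EuclideanSpace.norm_sq_eq, sum_congr rfl fun i _ => hsplit i, sum_add_distrib,
    ← sum_filter, ← sum_filter, sum_const, sum_const, Fin.card_filter_val_lt,
    Fin.card_filter_val_lt, min_eq_right (hmM.trans hMD), min_eq_right hMD, nsmul_eq_mul,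
    nsmul_eq_mul]
  ring

noncomputable def lamDistSq (m M : ℝ) : ℝ :=
  (M - m) * (m * (M + 4) + 4) / ((m + 2) * (M + 2)) ^ 2

theorem norm_lamVec_sub_sq {m M D : ℕ} (hmM : m ≤ M) (hMD : M ≤ D) :
    ‖lamVec m D - lamVec M D‖ ^ 2 = lamDistSq m M := by
  rw [lamVec, lamVec, EuclideanSpace.norm_sq_toLp_ite_lt_sub hmM hMD, lamDistSq]
  field_simp
  ring

theorem lamDistSq_self_add_one (x : ℝ) :
    lamDistSq x (x + 1) = (x + 1) * (x + 4) / ((x + 2) * (x + 3)) ^ 2 := by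
  rw [lamDistSq]
  ring_nf

/-- With `y = x + 1 + s` the cleared difference is `s · (positive) + s² (x³ + 5x² + 4x - 4)`. -/
theorem lamDistSq_self_add_one_le_right {x y : ℝ} (hx : 1 ≤ x) (hxy : x + 1 ≤ y) :
    lamDistSq x (x + 1) ≤ lamDistSq x y := by
  obtain ⟨s, hs, rfl⟩ : ∃ s, 0 ≤ s ∧ y = x + 1 + s := ⟨y - x - 1, by linarith, by ring⟩
  obtain ⟨e, he, rfl⟩ : ∃ e, 0 ≤ e ∧ x = 1 + e := ⟨x - 1, by linarith, by ring⟩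
  rw [lamDistSq_self_add_one, lamDistSq, div_le_div_iff₀ (by positivity) (by positivity),
    ← sub_nonneg]
  ring_nf
  positivity

theorem lamDistSq_self_add_one_le_left {x y : ℝ} (hy : 0 ≤ y) (hyx : y + 1 ≤ x) :
    lamDistSq x (x + 1) ≤ lamDistSq y x := by
  obtain ⟨s, hs, rfl⟩ : ∃ s, 0 ≤ s ∧ x = y + 1 + s := ⟨x - y - 1, by linarith, by ring⟩
  rw [lamDistSq_self_add_one, lamDistSq, div_le_div_iff₀ (by positivity) (by positivity),
    ← sub_nonneg]
  ring_nf
  positivity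

theorem stmt13 (d k D : ℕ) (hd : 1 ≤ d) (hdD : d + 1 ≤ D) (hkD : k ≤ D) (hkd : k ≠ d) :
    ‖lamVec d D - lamVec (d + 1) D‖ =
        Real.sqrt (((d : ℝ) + 1) * ((d : ℝ) + 4)) / (((d : ℝ) + 2) * ((d : ℝ) + 3)) ∧
      ‖lamVec d D - lamVec (d + 1) D‖ ≤ ‖lamVec k D - lamVec d D‖ := by
  have hstep : ‖lamVec d D - lamVec (d + 1) D‖ ^ 2 = lamDistSq d (d + 1) := by
    exact_mod_cast norm_lamVec_sub_sq d.le_succ hdD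
  constructor
  · rw [← Real.sqrt_sq (norm_nonneg _), hstep, lamDistSq_self_add_one,
      Real.sqrt_div' _ (by positivity), Real.sqrt_sq (by positivity)]
  · rw [← sq_le_sq₀ (norm_nonneg _) (norm_nonneg _), hstep]
    rcases hkd.lt_or_gt with hk | hk
    · rw [norm_lamVec_sub_sq hk.le (by omega)]
      exact lamDistSq_self_add_one_le_left k.cast_nonneg (by exact_mod_cast hk)
    · rw [norm_sub_rev, norm_lamVec_sub_sq hk.le hkD]
      exact lamDistSq_self_add_one_le_right (by exact_mod_cast hd) (by exact_mod_cast hk)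
end

section
/- For all real a > 0, all real k ≥ 1, and all x ∈ [0, 1/a], the function f(x) = (1 − ax)/((1 + ax)(1 + x + ax²)) satisfies f(x)^k ≥ 1 − k(1 + 2a)x. -/
/-! Bernoulli's inequality reduces the claim to the case `k = 1`, i.e. to
`1 - f(x) ≤ (1 + 2a) x`, which after clearing the denominator says that a polynomial
in `x` with nonnegative coefficients is nonnegative. -/

lemma one_sub_mul_one_sub_le_rpow {y k : ℝ} (hy : 0 ≤ y) (hk : 1 ≤ k) :
    1 - k * (1 - y) ≤ y ^ k := by
  have bernoulli := one_add_mul_self_le_rpow_one_add (s := y - 1) (by linarith) hk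
  simp only [add_sub_cancel] at bernoulli
  linarith

lemma one_sub_div_le_one_add_two_mul_mul {a x : ℝ} (ha : 0 ≤ a) (hx : 0 ≤ x) :
    1 - (1 - a * x) / ((1 + a * x) * (1 + x + a * x ^ 2)) ≤ (1 + 2 * a) * x := by
  have hD : 0 < (1 + a * x) * (1 + x + a * x ^ 2) := by positivity
  rw [one_sub_div hD.ne', div_le_iff₀ hD, ← sub_nonneg]
  have expand : (1 + 2 * a) * x * ((1 + a * x) * (1 + x + a * x ^ 2)) -
      ((1 + a * x) * (1 + x + a * x ^ 2) - (1 - a * x)) =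
      x ^ 2 * (1 + a + 2 * a ^ 2) + x ^ 3 * (2 * a + 3 * a ^ 2) + x ^ 4 * a ^ 2 * (1 + 2 * a) := by
    ring
  rw [expand]
  positivity

theorem stmt15 (a k x : ℝ) (ha : 0 < a) (hk : 1 ≤ k) (hx : x ∈ Set.Icc 0 (1 / a)) :
    1 - k * (1 + 2 * a) * x ≤
      ((1 - a * x) / ((1 + a * x) * (1 + x + a * x ^ 2))) ^ k := by
  obtain ⟨hx0, hxa⟩ := hx
  have hax : a * x ≤ 1 := by rwa [le_div_iff₀ ha, mul_comm] at hxa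
  have hf : 0 ≤ (1 - a * x) / ((1 + a * x) * (1 + x + a * x ^ 2)) :=
    div_nonneg (sub_nonneg.2 hax) (by positivity)
  calc 1 - k * (1 + 2 * a) * x
      ≤ 1 - k * (1 - (1 - a * x) / ((1 + a * x) * (1 + x + a * x ^ 2))) := by
        rw [mul_assoc]
        gcongr
        exact one_sub_div_le_one_add_two_mul_mul ha.le hx0
    _ ≤ _ := one_sub_mul_one_sub_le_rpow hf hk
end

section
/- Let M ⊂ ℝ^D be a smooth compact embedded manifold with reach τ, and let γ : [0, r̃] → M be a unit-speed geodesic from x to y of length r̃ with ‖γ̈(t)‖ ≤ 1/τ for all t, and let r = ‖x − y‖. Then: (1) r̃ − r̃²/(2τ) ≤ r ≤ r̃; (2) ‖y − (x + r̃ γ̇(0))‖ ≤ r̃²/(2τ); (3) if r ≤ τ/2, then r̃/τ ≤ 1 − √(1 − 2r/τ); and (4) if r ≤ (√2 − 1)τ, then r̃ ≤ r + r²/τ and ‖y − (x + r̃ γ̇(0))‖ ≤ r²/τ. -/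
/-!
The chord bound `r ≤ r̃` is the mean value inequality for the unit-speed curve `γ`.
Integrating `‖γ̈‖ ≤ 1/τ` twice gives the Taylor estimate `‖γ(r̃) - γ(0) - r̃ γ̇(0)‖ ≤ r̃²/(2τ)`,
and the reverse triangle inequality turns it into `r̃ - r̃²/(2τ) ≤ r`. Parts (3) and (4) are
elementary: for `r̃ ≤ τ` the quadratic inequality in `r̃/τ` is solved by the smaller root,
and `1 - s - s² ≤ √(1 - 2s)` for `0 ≤ s ≤ √2 - 1`.
-/

open Set

section Taylor

variable {E : Type*} [NormedAddCommGroup E] [NormedSpace ℝ E]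

theorem norm_sub_sub_smul_le_of_norm_deriv2_le {f f' f'' : ℝ → E} {a b C : ℝ} (hab : a ≤ b)
    (hf : ∀ t ∈ Icc a b, HasDerivAt f (f' t) t) (hf' : ∀ t ∈ Icc a b, HasDerivAt f' (f'' t) t)
    (hC : ∀ t ∈ Icc a b, ‖f'' t‖ ≤ C) :
    ‖f b - f a - (b - a) • f' a‖ ≤ C * (b - a) ^ 2 / 2 := by
  have ha : a ∈ Icc a b := left_mem_Icc.2 hab
  have hg : ∀ t ∈ Icc a b,
      HasDerivAt (fun u ↦ f u - f a - (u - a) • f' a) (f' t - f' a) t := fun t ht ↦ by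
    have := ((hf t ht).sub_const (f a)).sub (((hasDerivAt_id t).sub_const a).smul_const (f' a))
    rwa [one_smul] at this
  have hB : ∀ t, HasDerivAt (fun u ↦ C * (u - a) ^ 2 / 2) (C * (t - a)) t := fun t ↦ by
    refine ((((hasDerivAt_id t).sub_const a).pow 2).const_mul C |>.div_const 2).congr_deriv ?_
    simp only [id_eq, Nat.cast_ofNat, Nat.add_one_sub_one, pow_one, mul_one]
    ring
  have hlip : ∀ t ∈ Ico a b, ‖f' t - f' a‖ ≤ C * (t - a) := fun t ht ↦ by
    have := Convex.norm_image_sub_le_of_norm_hasDerivWithin_le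
      (fun u hu ↦ (hf' u hu).hasDerivWithinAt) hC (convex_Icc a b) ha (Ico_subset_Icc_self ht)
    rwa [Real.norm_of_nonneg (sub_nonneg.2 ht.1)] at this
  exact image_norm_le_of_norm_deriv_right_le_deriv_boundary
    (fun t ht ↦ (hg t ht).continuousAt.continuousWithinAt)
    (fun t ht ↦ (hg t (Ico_subset_Icc_self ht)).hasDerivWithinAt) (by simp) hB hlip
    (right_mem_Icc.2 hab)

end Taylor

theorem div_le_one_sub_sqrt_of_sub_sq_le {τ a r : ℝ} (hτ : 0 < τ) (ha : a ≤ τ)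
    (h : a - a ^ 2 / (2 * τ) ≤ r) : a / τ ≤ 1 - Real.sqrt (1 - 2 * r / τ) := by
  have hsq : 1 - 2 * r / τ ≤ (1 - a / τ) ^ 2 := by
    have : (1 - a / τ) ^ 2 - (1 - 2 * r / τ) = 2 * (r - (a - a ^ 2 / (2 * τ))) / τ := by
      field_simp; ring
    have : 0 ≤ 2 * (r - (a - a ^ 2 / (2 * τ))) / τ := by
      apply div_nonneg _ hτ.le; linarith
    linarith
  have : Real.sqrt (1 - 2 * r / τ) ≤ 1 - a / τ :=
    Real.sqrt_le_iff.2 ⟨by rw [sub_nonneg, div_le_one hτ]; exact ha, hsq⟩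
  linarith

theorem one_sub_sub_sq_le_sqrt_one_sub_two_mul {s : ℝ} (hs : 0 ≤ s) (hs' : s ≤ Real.sqrt 2 - 1) :
    1 - s - s ^ 2 ≤ Real.sqrt (1 - 2 * s) := by
  apply Real.le_sqrt_of_sq_le
  have h2 : (s + 1) ^ 2 ≤ 2 := by
    nlinarith [Real.sq_sqrt (zero_le_two : (0 : ℝ) ≤ 2), Real.sqrt_nonneg 2]
  -- `1 - 2s - (1 - s - s²)² = s² (1 - 2s - s²)` and `1 - 2s - s² = 2 - (s + 1)²`
  nlinarith [mul_nonneg (sq_nonneg s) (sub_nonneg.2 h2)]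

theorem le_add_sq_div_of_le_one_sub_sqrt {τ a r : ℝ} (hτ : 0 < τ) (hr : 0 ≤ r)
    (hr' : r ≤ (Real.sqrt 2 - 1) * τ) (h : a / τ ≤ 1 - Real.sqrt (1 - 2 * r / τ)) :
    a ≤ r + r ^ 2 / τ := by
  have hs := one_sub_sub_sq_le_sqrt_one_sub_two_mul (div_nonneg hr hτ.le)
    ((div_le_iff₀ hτ).2 hr')
  rw [← mul_div_assoc] at hs
  have : a / τ ≤ (r + r ^ 2 / τ) / τ := by
    calc a / τ ≤ r / τ + (r / τ) ^ 2 := by linarith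
      _ = (r + r ^ 2 / τ) / τ := by field_simp
  exact (div_le_div_iff_of_pos_right hτ).1 this

theorem sq_div_two_mul_le_sq_div {τ a r : ℝ} (hτ : 0 < τ) (ha : 0 ≤ a) (hr : 0 ≤ r)
    (hr' : r ≤ (Real.sqrt 2 - 1) * τ) (h : a ≤ r + r ^ 2 / τ) :
    a ^ 2 / (2 * τ) ≤ r ^ 2 / τ := by
  have hr2 : r ^ 2 / τ ≤ (Real.sqrt 2 - 1) * r := by
    rw [div_le_iff₀ hτ]; nlinarith
  have ha' : a ^ 2 ≤ 2 * r ^ 2 := by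
    have : a ≤ Real.sqrt 2 * r := by linarith
    nlinarith [Real.sq_sqrt (zero_le_two : (0 : ℝ) ≤ 2)]
  rw [div_le_div_iff₀ (by positivity) hτ]
  nlinarith

theorem stmt18 {D : ℕ} (τ rt : ℝ) (hτ : 0 < τ) (hrt : 0 < rt)
    (γ γ' γ'' : ℝ → EuclideanSpace ℝ (Fin D))
    (hd1 : ∀ t ∈ Set.Icc (0 : ℝ) rt, HasDerivAt γ (γ' t) t)
    (hd2 : ∀ t ∈ Set.Icc (0 : ℝ) rt, HasDerivAt γ' (γ'' t) t)
    (hunit : ∀ t ∈ Set.Icc (0 : ℝ) rt, ‖γ' t‖ = 1)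
    (hacc : ∀ t ∈ Set.Icc (0 : ℝ) rt, ‖γ'' t‖ ≤ 1 / τ)
    (x y : EuclideanSpace ℝ (Fin D)) (hx : x = γ 0) (hy : y = γ rt)
    (r : ℝ) (hr : r = ‖x - y‖) :
    (rt - rt ^ 2 / (2 * τ) ≤ r ∧ r ≤ rt) ∧
      ‖y - (x + rt • γ' 0)‖ ≤ rt ^ 2 / (2 * τ) ∧
      (r ≤ τ / 2 → rt ≤ τ → rt / τ ≤ 1 - Real.sqrt (1 - 2 * r / τ)) ∧
      (r ≤ (Real.sqrt 2 - 1) * τ → rt ≤ τ →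
        rt ≤ r + r ^ 2 / τ ∧ ‖y - (x + rt • γ' 0)‖ ≤ r ^ 2 / τ) := by
  subst hx hy hr
  have hmem : (0 : ℝ) ∈ Icc 0 rt := left_mem_Icc.2 hrt.le
  have hchord : ‖γ 0 - γ rt‖ ≤ rt := by
    simpa [abs_of_pos hrt] using Convex.norm_image_sub_le_of_norm_hasDerivWithin_le
      (fun u hu ↦ (hd1 u hu).hasDerivWithinAt) (fun u hu ↦ (hunit u hu).le)
      (convex_Icc 0 rt) (right_mem_Icc.2 hrt.le) hmem
  have htaylor : ‖γ rt - (γ 0 + rt • γ' 0)‖ ≤ rt ^ 2 / (2 * τ) := by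
    calc ‖γ rt - (γ 0 + rt • γ' 0)‖ = ‖γ rt - γ 0 - (rt - 0) • γ' 0‖ := by rw [sub_zero, sub_sub]
      _ ≤ 1 / τ * (rt - 0) ^ 2 / 2 := norm_sub_sub_smul_le_of_norm_deriv2_le hrt.le hd1 hd2 hacc
      _ = rt ^ 2 / (2 * τ) := by field_simp; ring
  have hlow : rt - rt ^ 2 / (2 * τ) ≤ ‖γ 0 - γ rt‖ := by
    have hsplit : rt • γ' 0 = (γ rt - γ 0) - (γ rt - (γ 0 + rt • γ' 0)) := by abel
    have := norm_sub_le (γ rt - γ 0) (γ rt - (γ 0 + rt • γ' 0))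
    rw [← hsplit, norm_smul, hunit 0 hmem, Real.norm_of_nonneg hrt.le, mul_one] at this
    rw [norm_sub_rev]
    linarith
  have hroot (hrtτ : rt ≤ τ) := div_le_one_sub_sqrt_of_sub_sq_le hτ hrtτ hlow
  refine ⟨⟨hlow, hchord⟩, htaylor, fun _ hrtτ ↦ hroot hrtτ, fun hsmall hrtτ ↦ ?_⟩
  have hquad := le_add_sq_div_of_le_one_sub_sqrt hτ (norm_nonneg _) hsmall (hroot hrtτ)
  exact ⟨hquad, htaylor.trans (sq_div_two_mul_le_sq_div hτ hrt.le (norm_nonneg _) hsmall hquad)⟩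
end

section
/- Let (M, d) be a metric space and n a positive integer. Define d∘ on M^n by d∘(x, y) = min over permutations σ ∈ S_n of d_{M^n}(x, σ·y), where σ·y permutes coordinates and d_{M^n} is (say) the ℓ² product metric. Then d∘ is a metric on the quotient of M^n by coordinate permutations, and when M = ℝ with the Euclidean product metric, if the entries of x and y are both sorted in decreasing order then d∘(x, y) = ‖x − y‖. -/
/-!
Write `permDist x y` as the infimum over `σ` of the ℓ² distance from `x` to `y ∘ σ`. Reindexing both
arguments by a permutation is an ℓ² isometry, so symmetry and the triangle inequality of the ℓ²
metric survive the infimum, the triangle inequality by composing the permutations.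
For real vectors sorted the same way, expanding the squares reduces `∑ (x i - y (σ i))²` to
`-2 ∑ x i * y (σ i)` plus a constant, and the rearrangement inequality makes `σ = 1` optimal.
-/

open Finset

/-- The permutation-matching distance on `M^n`, using the ℓ² product metric. -/
noncomputable def permDist {M : Type*} [MetricSpace M] {n : ℕ} (x y : Fin n → M) : ℝ :=
  ⨅ σ : Equiv.Perm (Fin n), Real.sqrt (∑ i, dist (x i) (y (σ i)) ^ 2)

section PiLp

variable {ι : Type*} [Fintype ι]

theorem PiLp.dist_eq_sqrt_sum_dist_sq {α : ι → Type*} [∀ i, Dist (α i)] (x y : PiLp 2 α) :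
    dist x y = √(∑ i, dist (x i) (y i) ^ 2) := by
  rw [PiLp.dist_eq_sum (by norm_num), Real.sqrt_eq_rpow]
  norm_num

theorem PiLp.dist_toLp_comp_perm {M : Type*} [Dist M] (x y : ι → M)
    (σ : Equiv.Perm ι) :
    dist (WithLp.toLp 2 (x ∘ σ)) (WithLp.toLp 2 (y ∘ σ)) =
      dist (WithLp.toLp 2 x) (WithLp.toLp 2 y) := by
  simp only [PiLp.dist_eq_sqrt_sum_dist_sq, Function.comp_apply]
  rw [Equiv.sum_comp σ fun i => dist (x i) (y i) ^ 2]

end PiLp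

theorem Monovary.sum_sub_sq_le_sum_sub_comp_perm_sq {ι R : Type*} [Fintype ι] [CommRing R]
    [LinearOrder R] [IsStrictOrderedRing R] {f g : ι → R} (hfg : Monovary f g) (σ : Equiv.Perm ι) :
    ∑ i, (f i - g i) ^ 2 ≤ ∑ i, (f i - g (σ i)) ^ 2 := by
  have expand : ∀ h : ι → R,
      ∑ i, (f i - h i) ^ 2 = ∑ i, f i ^ 2 + ∑ i, h i ^ 2 - 2 * ∑ i, f i * h i := fun h => by
    simp only [sub_sq, sum_add_distrib, sum_sub_distrib, mul_sum, mul_assoc]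
    ring
  rw [expand g, expand fun i => g (σ i), Equiv.sum_comp σ fun i => g i ^ 2]
  linarith [hfg.sum_mul_comp_perm_le_sum_mul (σ := σ)]

section permDist

variable {M : Type*} [MetricSpace M] {n : ℕ}

theorem permDist_eq_iInf_dist (x y : Fin n → M) :
    permDist x y = ⨅ σ : Equiv.Perm (Fin n), dist (WithLp.toLp 2 x) (WithLp.toLp 2 (y ∘ σ)) := by
  simp only [permDist, PiLp.dist_eq_sqrt_sum_dist_sq, Function.comp_apply]

theorem permDist_le_dist (x y : Fin n → M) (σ : Equiv.Perm (Fin n)) :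
    permDist x y ≤ dist (WithLp.toLp 2 x) (WithLp.toLp 2 (y ∘ σ)) :=
  (permDist_eq_iInf_dist x y).trans_le <|
    ciInf_le ⟨0, by rintro _ ⟨τ, rfl⟩; exact dist_nonneg⟩ σ

theorem permDist_nonneg (x y : Fin n → M) : 0 ≤ permDist x y :=
  (permDist_eq_iInf_dist x y).symm ▸ le_ciInf fun _ => dist_nonneg

theorem permDist_self (x : Fin n → M) : permDist x x = 0 :=
  le_antisymm (by simpa using permDist_le_dist x x 1) (permDist_nonneg x x)

theorem permDist_le_permDist_swap (x y : Fin n → M) : permDist y x ≤ permDist x y := by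
  rw [permDist_eq_iInf_dist x y]
  refine le_ciInf fun σ => (permDist_le_dist y x σ⁻¹).trans_eq ?_
  rw [dist_comm, ← PiLp.dist_toLp_comp_perm _ _ σ]
  simp [Function.comp_def]

theorem permDist_comm (x y : Fin n → M) : permDist x y = permDist y x :=
  le_antisymm (permDist_le_permDist_swap y x) (permDist_le_permDist_swap x y)

theorem permDist_triangle (x y z : Fin n → M) :
    permDist x z ≤ permDist x y + permDist y z := by
  rw [permDist_eq_iInf_dist x y, permDist_eq_iInf_dist y z]
  refine le_ciInf_add_ciInf fun σ τ => (permDist_le_dist x z (σ.trans τ)).trans ?_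
  calc dist (WithLp.toLp 2 x) (WithLp.toLp 2 (z ∘ σ.trans τ))
      ≤ dist (WithLp.toLp 2 x) (WithLp.toLp 2 (y ∘ σ)) +
          dist (WithLp.toLp 2 (y ∘ σ)) (WithLp.toLp 2 ((z ∘ τ) ∘ σ)) := dist_triangle _ _ _
    _ = dist (WithLp.toLp 2 x) (WithLp.toLp 2 (y ∘ σ)) +
          dist (WithLp.toLp 2 y) (WithLp.toLp 2 (z ∘ τ)) := by
      rw [PiLp.dist_toLp_comp_perm]

end permDist

theorem permDist_eq_sqrt_sum_sq_of_monovary {n : ℕ} {x y : Fin n → ℝ} (hxy : Monovary x y) :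
    permDist x y = √(∑ i, (x i - y i) ^ 2) := by
  have cost : ∀ σ : Equiv.Perm (Fin n),
      dist (WithLp.toLp 2 x) (WithLp.toLp 2 (y ∘ σ)) = √(∑ i, (x i - y (σ i)) ^ 2) := fun σ => by
    simp [PiLp.dist_eq_sqrt_sum_dist_sq, Real.dist_eq, sq_abs]
  refine le_antisymm ((permDist_le_dist x y 1).trans_eq (by simpa using cost 1)) ?_
  rw [permDist_eq_iInf_dist]
  exact le_ciInf fun σ =>
    (cost σ).symm ▸ Real.sqrt_le_sqrt (hxy.sum_sub_sq_le_sum_sub_comp_perm_sq σ)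

theorem stmt19_general {M : Type*} [MetricSpace M] {n : ℕ} :
    ((∀ x : Fin n → M, permDist x x = 0) ∧
      (∀ x y : Fin n → M, 0 ≤ permDist x y) ∧
      (∀ x y : Fin n → M, permDist x y = permDist y x) ∧
      (∀ x y z : Fin n → M, permDist x z ≤ permDist x y + permDist y z)) ∧
      (∀ x y : Fin n → ℝ, Antitone x → Antitone y →
        permDist x y = Real.sqrt (∑ i, (x i - y i) ^ 2)) :=
  ⟨⟨permDist_self, permDist_nonneg, permDist_comm, permDist_triangle⟩,
    fun _ _ hx hy => permDist_eq_sqrt_sum_sq_of_monovary (hx.monovary hy)⟩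

theorem stmt19 {M : Type*} [MetricSpace M] {n : ℕ} (hn : 0 < n) :
    ((∀ x : Fin n → M, permDist x x = 0) ∧
      (∀ x y : Fin n → M, 0 ≤ permDist x y) ∧
      (∀ x y : Fin n → M, permDist x y = permDist y x) ∧
      (∀ x y z : Fin n → M, permDist x z ≤ permDist x y + permDist y z)) ∧
      (∀ x y : Fin n → ℝ, Antitone x → Antitone y →
        permDist x y = Real.sqrt (∑ i, (x i - y i) ^ 2)) :=
  stmt19_general
end
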